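/- Let d ≥ 1 and let G be a connected locally finite d-regular simple graph on vertex set V. If G is bipartite, then there exist d fixed-point-free involutions τ₁, …, τ_d of V such that for every vertex x the vertices τ₁(x), …, τ_d(x) are pairwise distinct and the neighborhood of x in G is exactly {τ₁(x), …, τ_d(x)}. If G is not bipartite, then the same conclusion holds for the canonical double cover G ⊗ K₂ on the vertex set V × Bool. (Equivalently: if G is bipartite then G is isomorphic to a Schreier graph of the free product (ℤ/2ℤ)^{∗d}, and otherwise G ⊗ K₂ is.) -/

import Mathlib

/-- The canonical double cover `G ⊗ K₂` of a simple graph `G`: vertices are `V × Bool`,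
and `(v, b)` is adjacent to `(w, c)` iff `v` is adjacent to `w` in `G` and `b ≠ c`. -/
def doubleCover {V : Type*} (G : SimpleGraph V) : SimpleGraph (V × Bool) where
  Adj x y := G.Adj x.1 y.1 ∧ x.2 ≠ y.2
  symm := ⟨fun _ _ h => ⟨h.1.symm, Ne.symm h.2⟩⟩
  loopless := ⟨fun _ h => h.2 rfl⟩

/-- A graph `G` carries `d` fixed-point-free involutions `τ₁, …, τ_d` of its vertex set such
that for every vertex `x` the vertices `τ₁ x, …, τ_d x` are pairwise distinct and form exactly
the neighborhood of `x`.  (This encodes being a Schreier graph of `(ℤ/2ℤ)^{∗d}`.) -/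
def InvolutionsStructure {W : Type*} (H : SimpleGraph W) (d : ℕ) : Prop :=
  ∃ τ : Fin d → Equiv.Perm W,
    (∀ i, ∀ x, τ i (τ i x) = x) ∧
    (∀ i, ∀ x, τ i x ≠ x) ∧
    (∀ x : W, Function.Injective (fun i : Fin d => τ i x) ∧
      (Set.range fun i : Fin d => τ i x) = H.neighborSet x)

/-! A bipartite `d`-regular locally finite graph has a perfect matching: Hall's condition holds by
double counting, so some injection sends every vertex to a neighbour, and Schröder–Bernstein
applied to this injection twice yields a permutation `σ` with `x ~ σ x` for all `x`, which a 2-colouring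
turns into a fixed-point-free involution. Deleting the matching leaves a bipartite
`(d - 1)`-regular graph, so induction on `d` produces the `d` involutions. The double cover
`G ⊗ K₂` is bipartite and `d`-regular whether or not `G` is. -/

open Finset Function

namespace SimpleGraph

variable {V : Type*} {G : SimpleGraph V} {d : ℕ}

theorem IsRegularOfDegree.card_le_card_biUnion_neighborFinset [G.LocallyFinite] [DecidableEq V]
    (hreg : G.IsRegularOfDegree d) (hd : d ≠ 0) (s : Finset V) :
    #s ≤ #(s.biUnion fun x => G.neighborFinset x) := by
  classical
  refine Nat.le_of_mul_le_mul_right (card_mul_le_card_mul G.Adj (m := d) (n := d) ?_ ?_)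
    (Nat.pos_of_ne_zero hd)
  · intro x hx
    rw [← hreg x, ← card_neighborFinset_eq_degree]
    refine card_le_card fun y hy => (mem_bipartiteAbove _).2 ⟨mem_biUnion.2 ⟨x, hx, hy⟩, ?_⟩
    simpa using hy
  · intro y _
    rw [← hreg y, ← card_neighborFinset_eq_degree]
    exact card_le_card fun x hx => by simpa using ((mem_bipartiteBelow _).1 hx).2.symm

theorem IsRegularOfDegree.exists_perm_adj [G.LocallyFinite] (hreg : G.IsRegularOfDegree d)
    (hd : d ≠ 0) : ∃ σ : Equiv.Perm V, ∀ x, G.Adj x (σ x) := by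
  classical
  obtain ⟨f, hf, hfG⟩ :=
    (all_card_le_biUnion_card_iff_exists_injective fun x => G.neighborFinset x).1
      (hreg.card_le_card_biUnion_neighborFinset hd)
  have hfG : ∀ x, G.Adj x (f x) := fun x => (mem_neighborFinset _ _ _).1 (hfG x)
  obtain ⟨h, hbij, hh⟩ :=
    Embedding.schroeder_bernstein_of_rel hf hf G.Adj hfG fun x => (hfG x).symm
  exact ⟨Equiv.ofBijective h hbij, hh⟩

/-- Adjacent vertices have different colours, so `σ` on colour `0` and `σ⁻¹` on colour `1` fit
together into an involution. -/
theorem Colorable.exists_involutive_adj (hcol : G.Colorable 2) {σ : Equiv.Perm V}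
    (hσ : ∀ x, G.Adj x (σ x)) : ∃ m : V → V, Involutive m ∧ ∀ x, G.Adj x (m x) := by
  obtain ⟨C⟩ := hcol
  have hC : ∀ {x y}, G.Adj x y → (C x = 0 ↔ C y ≠ 0) := fun h => by have := C.valid h; omega
  have hσ' : ∀ x, G.Adj (σ.symm x) x := fun x => by simpa using hσ (σ.symm x)
  refine ⟨fun x => if C x = 0 then σ x else σ.symm x, fun x => ?_, fun x => ?_⟩
  · by_cases hx : C x = 0
    · simp [hx, (hC (hσ x)).1 hx]
    · simp [hx, (hC (hσ' x)).2 hx]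
  · dsimp only
    split_ifs
    · exact hσ x
    · exact (hσ' x).symm

noncomputable instance [G.LocallyFinite] (s : Set (Sym2 V)) : (G.deleteEdges s).LocallyFinite :=
  fun v => ((G.neighborSet v).toFinite.subset fun _ h => (deleteEdges_le s h : G.Adj v _)).fintype

theorem deleteEdges_range_adj_iff {m : V → V} (hm : Involutive m) {x y : V} :
    (G.deleteEdges (Set.range fun z => s(z, m z))).Adj x y ↔ G.Adj x y ∧ y ≠ m x := by
  simp only [deleteEdges_adj, Set.mem_range, Sym2.eq_iff, not_exists]
  constructor
  · rintro ⟨hxy, h⟩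
    exact ⟨hxy, fun hy => h x (Or.inl ⟨rfl, hy.symm⟩)⟩
  · rintro ⟨hxy, hy⟩
    refine ⟨hxy, fun z hz => hy ?_⟩
    rcases hz with ⟨rfl, rfl⟩ | ⟨rfl, rfl⟩
    exacts [rfl, (hm z).symm]

theorem neighborSet_eq_insert_deleteEdges_range {m : V → V} (hm : Involutive m)
    (hadj : ∀ x, G.Adj x (m x)) (x : V) :
    G.neighborSet x =
      insert (m x) ((G.deleteEdges (Set.range fun z => s(z, m z))).neighborSet x) := by
  ext y
  simp only [Set.mem_insert_iff, mem_neighborSet, deleteEdges_range_adj_iff hm]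
  by_cases hy : y = m x
  · simp [hy, hadj x]
  · simp [hy]

theorem degree_eq_ncard_neighborSet (G : SimpleGraph V) [G.LocallyFinite] (v : V) :
    G.degree v = (G.neighborSet v).ncard := by
  rw [Set.ncard_eq_toFinset_card']
  rfl

theorem IsRegularOfDegree.deleteEdges_range [G.LocallyFinite] {m : V → V} (hm : Involutive m)
    (hadj : ∀ x, G.Adj x (m x)) (hreg : G.IsRegularOfDegree (d + 1)) :
    (G.deleteEdges (Set.range fun z => s(z, m z))).IsRegularOfDegree d := by
  intro x
  have hnotMem : m x ∉ (G.deleteEdges (Set.range fun z => s(z, m z))).neighborSet x := fun h =>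
    ((deleteEdges_range_adj_iff hm).1 h).2 rfl
  have hcard := degree_eq_ncard_neighborSet G x
  rw [hreg x, neighborSet_eq_insert_deleteEdges_range hm hadj x,
    Set.ncard_insert_of_notMem hnotMem, ← degree_eq_ncard_neighborSet] at hcard
  omega

theorem IsRegularOfDegree.exists_involutive_adj [G.LocallyFinite] (hcol : G.Colorable 2)
    (hreg : G.IsRegularOfDegree d) (hd : d ≠ 0) :
    ∃ m : V → V, Involutive m ∧ ∀ x, G.Adj x (m x) :=
  have ⟨_, hσ⟩ := hreg.exists_perm_adj hd
  hcol.exists_involutive_adj hσ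

end SimpleGraph

open SimpleGraph

section

variable {V : Type*} {G : SimpleGraph V} {d : ℕ}

theorem involutionsStructure_zero [G.LocallyFinite] (hreg : G.IsRegularOfDegree 0) :
    InvolutionsStructure G 0 := by
  refine ⟨finZeroElim, finZeroElim, finZeroElim, fun x => ⟨fun i => i.elim0, ?_⟩⟩
  rw [Set.range_eq_empty, eq_comm, ← Set.ncard_eq_zero, ← degree_eq_ncard_neighborSet, hreg x]

theorem InvolutionsStructure.of_deleteEdges_range {m : V → V} (hm : Involutive m)
    (hadj : ∀ x, G.Adj x (m x))
    (h : InvolutionsStructure (G.deleteEdges (Set.range fun z => s(z, m z))) d) :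
    InvolutionsStructure G (d + 1) := by
  obtain ⟨τ, hτ, hτ_ne, hτ_nbhd⟩ := h
  have hτ_adj : ∀ i x, (G.deleteEdges (Set.range fun z => s(z, m z))).Adj x (τ i x) :=
    fun i x => by rw [← mem_neighborSet, ← (hτ_nbhd x).2]; exact Set.mem_range_self i
  have happ : ∀ x, (fun i => (Fin.cons hm.toPerm τ : Fin (d + 1) → _) i x) =
      Fin.cons (m x) fun i => τ i x := fun x => Fin.comp_cons (fun σ : Equiv.Perm V => σ x) _ _
  refine ⟨Fin.cons hm.toPerm τ, Fin.cases hm hτ,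
    Fin.cases (fun x => (G.ne_of_adj (hadj x)).symm) hτ_ne, fun x => ⟨?_, ?_⟩⟩
  · rw [happ, Fin.cons_injective_iff]
    exact ⟨fun ⟨i, hi⟩ => ((deleteEdges_range_adj_iff hm).1 (hτ_adj i x)).2 hi, (hτ_nbhd x).1⟩
  · rw [happ, Fin.range_cons, (hτ_nbhd x).2, neighborSet_eq_insert_deleteEdges_range hm hadj]

theorem involutionsStructure_of_colorable_two [G.LocallyFinite] (hcol : G.Colorable 2)
    (hreg : G.IsRegularOfDegree d) : InvolutionsStructure G d := by
  induction d generalizing G with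
  | zero => exact involutionsStructure_zero hreg
  | succ d ih =>
    obtain ⟨m, hm, hadj⟩ := hreg.exists_involutive_adj hcol d.succ_ne_zero
    exact .of_deleteEdges_range hm hadj <|
      ih (hcol.mono_left (deleteEdges_le _)) (hreg.deleteEdges_range hm hadj)

def doubleCoverNeighborSetEquiv (G : SimpleGraph V) (p : V × Bool) :
    G.neighborSet p.1 ≃ (doubleCover G).neighborSet p where
  toFun w := ⟨(w, !p.2), w.2, by simp⟩
  invFun q := ⟨q.1.1, q.2.1⟩
  left_inv _ := rfl
  right_inv := by
    rintro ⟨⟨w, c⟩, -, hc⟩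
    obtain rfl : c = !p.2 := Bool.eq_not.2 hc.symm
    rfl

noncomputable instance [G.LocallyFinite] : (doubleCover G).LocallyFinite := fun p =>
  Fintype.ofEquiv _ (doubleCoverNeighborSetEquiv G p)

theorem doubleCover_isRegularOfDegree [G.LocallyFinite] (hreg : G.IsRegularOfDegree d) :
    (doubleCover G).IsRegularOfDegree d := fun p => by
  rw [← card_neighborSet_eq_degree, ← Fintype.card_congr (doubleCoverNeighborSetEquiv G p),
    card_neighborSet_eq_degree, hreg]

theorem doubleCover_colorable_two : (doubleCover G).Colorable 2 :=
  (Coloring.mk (G := doubleCover G) Prod.snd fun h => h.2).colorable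

end

theorem bipartite_or_doubleCover_involutions_general {V : Type*} (G : SimpleGraph V)
    [G.LocallyFinite] (d : ℕ)
    (hreg : G.IsRegularOfDegree d) :
    (G.Colorable 2 → InvolutionsStructure G d) ∧
    (¬ G.Colorable 2 → InvolutionsStructure (doubleCover G) d) :=
  ⟨fun hcol => involutionsStructure_of_colorable_two hcol hreg, fun _ =>
    involutionsStructure_of_colorable_two doubleCover_colorable_two
      (doubleCover_isRegularOfDegree hreg)⟩

/-- Let `G` be a connected locally finite `d`-regular simple graph, `d ≥ 1`.
If `G` is bipartite, then `G` carries `d` fixed-point-free involutions describing all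
neighborhoods; if `G` is not bipartite, then so does the canonical double cover `G ⊗ K₂`.
(Equivalently: `G`, respectively `G ⊗ K₂`, is isomorphic to a Schreier graph of
`(ℤ/2ℤ)^{∗d}`.) -/
theorem bipartite_or_doubleCover_involutions {V : Type*} (G : SimpleGraph V)
    [G.LocallyFinite] (d : ℕ) (hd : 1 ≤ d) (hconn : G.Connected)
    (hreg : G.IsRegularOfDegree d) :
    (G.Colorable 2 → InvolutionsStructure G d) ∧
    (¬ G.Colorable 2 → InvolutionsStructure (doubleCover G) d) :=
  bipartite_or_doubleCover_involutions_general G d hreg
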